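/- Let α, γ > 0 with α ≥ γ/2, and suppose for each ε ∈ (0, e^{-1}) one chooses L with s^{-αL} ≈ ε (so L+1 ≤ C|log ε|), per-level costs C_ℓ ≤ c s^{γℓ} and variances V_ℓ ≤ v s^{-βℓ} with β < γ, and sample numbers N_ℓ such that (L+1)Σ_ℓ V_ℓ/N_ℓ ≤ ε²/2. Then N_ℓ can be chosen so that the total cost Σ_ℓ N_ℓ C_ℓ is bounded by C·ε^{-2-(γ-β)/α}·|log ε|. -/

import Mathlib

/-!
Allocating samples `N_ℓ ∝ √(V_ℓ / C_ℓ)` (the Lagrange optimum, plus one so that `N_ℓ ≥ 1`)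
spends the variance budget `ε² / (2(L+1))` exactly, at cost
`∑ C_ℓ + 2(L+1) ε⁻² (∑ √(V_ℓ C_ℓ))²`. Both level sums grow geometrically, with ratios at least
`2^γ` and `2^((γ-β)/2)`, so they are dominated by their top terms `s^(γL) ≤ ε^(-γ/α)` and
`s^((γ-β)L/2) ≤ ε^(-(γ-β)/(2α))`. As `β ≤ 2α`, the first is `O(ε^(-2-(γ-β)/α))`, and
`L + 1 = O(|log ε|)` gives the logarithm.
-/

open Finset

theorem geom_sum_range_succ_le_mul_pow {x : ℝ} (hx : 1 < x) (L : ℕ) :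
    ∑ ℓ ∈ range (L + 1), x ^ ℓ ≤ x / (x - 1) * x ^ L := by
  have hx1 : 0 < x - 1 := by linarith
  rw [geom_sum_eq hx.ne', div_mul_eq_mul_div, ← pow_succ']
  exact div_le_div_of_nonneg_right (by linarith) hx1.le

theorem sum_rpow_mul_le {b s t : ℝ} (hb : 1 < b) (hbs : b ≤ s) (ht : 0 < t) (L : ℕ) :
    ∑ ℓ ∈ range (L + 1), s ^ (t * ℓ) ≤ b ^ t / (b ^ t - 1) * s ^ (t * L) := by
  have hs : 0 ≤ s := by linarith
  have hbt : 1 < b ^ t := Real.one_lt_rpow hb ht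
  have hbst : b ^ t ≤ s ^ t := Real.rpow_le_rpow (by linarith) hbs ht.le
  have ratio_anti : s ^ t / (s ^ t - 1) ≤ b ^ t / (b ^ t - 1) := by
    rw [div_le_div_iff₀ (by linarith) (by linarith)]
    nlinarith
  simp only [Real.rpow_mul hs, Real.rpow_natCast]
  calc ∑ ℓ ∈ range (L + 1), (s ^ t) ^ ℓ ≤ s ^ t / (s ^ t - 1) * (s ^ t) ^ L :=
        geom_sum_range_succ_le_mul_pow (hbt.trans_le hbst) L
    _ ≤ b ^ t / (b ^ t - 1) * (s ^ t) ^ L := by gcongr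

theorem rpow_mul_le_rpow_neg_div {s α ε x t : ℝ} (hs : 0 < s) (hα : 0 < α) (hε : 0 < ε)
    (hx : ε ≤ s ^ (-(α * x))) (ht : 0 ≤ t) : s ^ (t * x) ≤ ε ^ (-(t / α)) := by
  have hinv : s ^ (α * x) ≤ ε⁻¹ := by
    rw [Real.rpow_neg hs.le] at hx
    simpa using inv_anti₀ hε hx
  calc s ^ (t * x) = (s ^ (α * x)) ^ (t / α) := by
        rw [← Real.rpow_mul hs.le]; congr 1; field_simp
    _ ≤ ε⁻¹ ^ (t / α) := by gcongr
    _ = ε ^ (-(t / α)) := by rw [Real.inv_rpow hε.le, Real.rpow_neg hε.le]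

theorem one_lt_abs_log {ε : ℝ} (hε : 0 < ε) (hεe : ε < Real.exp (-1)) : 1 < |Real.log ε| := by
  have : Real.log ε < -1 := by simpa using Real.log_lt_log hε hεe
  rw [abs_of_neg (by linarith)]; linarith

theorem add_one_le_mul_abs_log {s α ε x : ℝ} (hs : 2 ≤ s) (hα : 0 < α) (hε : 0 < ε)
    (hεe : ε < Real.exp (-1)) (hx : ε ≤ s ^ (-(α * x))) :
    x + 1 ≤ (1 / (α * Real.log 2) + 1) * |Real.log ε| := by
  have hlog := one_lt_abs_log hε hεe
  have hlog2 : 0 < Real.log 2 := Real.log_pos one_lt_two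
  have hx' : x ≤ |Real.log ε| / (α * Real.log 2) := by
    rcases le_or_gt x 0 with h | h
    · exact h.trans (by positivity)
    have hxlog : α * x * Real.log s ≤ |Real.log ε| := by
      have := Real.log_le_log hε hx
      rw [Real.log_rpow (by linarith)] at this
      linarith [neg_le_abs (Real.log ε)]
    rw [le_div_iff₀ (by positivity)]
    nlinarith [mul_le_mul_of_nonneg_left (Real.log_le_log two_pos hs) (mul_pos hα h).le]
  calc x + 1 ≤ |Real.log ε| / (α * Real.log 2) + |Real.log ε| := by linarith
    _ = _ := by ring

theorem sum_range_le_of_le_rpow_mul {b s t a α ε : ℝ} (hb : 1 < b) (hbs : b ≤ s) (ht : 0 < t)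
    (ha : 0 ≤ a) (hα : 0 < α) (hε : 0 < ε) {L : ℕ} (hL : ε ≤ s ^ (-(α * L))) {f : ℕ → ℝ}
    (hf : ∀ ℓ ≤ L, f ℓ ≤ a * s ^ (t * ℓ)) :
    ∑ ℓ ∈ range (L + 1), f ℓ ≤ a * (b ^ t / (b ^ t - 1)) * ε ^ (-(t / α)) := calc
  ∑ ℓ ∈ range (L + 1), f ℓ ≤ ∑ ℓ ∈ range (L + 1), a * s ^ (t * ℓ) :=
    sum_le_sum fun ℓ hℓ => hf ℓ (mem_range_succ_iff.mp hℓ)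
  _ ≤ a * (b ^ t / (b ^ t - 1) * s ^ (t * L)) := by
    rw [← mul_sum]; exact mul_le_mul_of_nonneg_left (sum_rpow_mul_le hb hbs ht L) ha
  _ ≤ a * (b ^ t / (b ^ t - 1) * ε ^ (-(t / α))) := by
    have : 0 ≤ b ^ t / (b ^ t - 1) :=
      div_nonneg (by positivity) (by linarith [Real.one_lt_rpow hb ht])
    gcongr
    exact rpow_mul_le_rpow_neg_div (by linarith) hα hε hL ht.le
  _ = _ := by ring

theorem sqrt_mul_le_of_le_rpow {s v c β γ x V C : ℝ} (hs : 0 < s) (hv : 0 ≤ v) (hc : 0 ≤ c)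
    (hV₀ : 0 ≤ V) (hC₀ : 0 ≤ C) (hV : V ≤ v * s ^ (-(β * x))) (hC : C ≤ c * s ^ (γ * x)) :
    √(V * C) ≤ √(v * c) * s ^ ((γ - β) / 2 * x) := by
  rw [Real.sqrt_le_left (by positivity)]
  calc V * C ≤ v * s ^ (-(β * x)) * (c * s ^ (γ * x)) := mul_le_mul hV hC hC₀ (hV₀.trans hV)
    _ = v * c * s ^ (-(β * x) + γ * x) := by rw [Real.rpow_add hs]; ring
    _ = (√(v * c) * s ^ ((γ - β) / 2 * x)) ^ 2 := by
      rw [mul_pow, Real.sq_sqrt (by positivity), ← Real.rpow_mul_natCast hs.le]; ring_nf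

theorem exists_sampleSizes_sum_div_le_and_sum_mul_eq {ι : Type*} (I : Finset ι) {V C : ι → ℝ}
    (hV : ∀ i ∈ I, 0 < V i) (hC : ∀ i ∈ I, 0 < C i) {δ : ℝ} (hδ : 0 < δ) :
    ∃ N : ι → ℝ, (∀ i ∈ I, 1 ≤ N i) ∧ ∑ i ∈ I, V i / N i ≤ δ ∧
      ∑ i ∈ I, N i * C i = ∑ i ∈ I, C i + (∑ i ∈ I, √(V i * C i)) ^ 2 / δ := by
  set S := ∑ i ∈ I, √(V i * C i)
  have hS_pos : ∀ i ∈ I, 0 < S := fun i hi =>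
    (Real.sqrt_pos.mpr (mul_pos (hV i hi) (hC i hi))).trans_le
      (single_le_sum (f := fun j => √(V j * C j)) (fun j _ => Real.sqrt_nonneg _) hi)
  refine ⟨fun i => 1 + √(V i) / √(C i) * S / δ, fun i hi => ?_, ?_, ?_⟩
  · have := (hS_pos i hi).le
    simp only [le_add_iff_nonneg_right]; positivity
  · calc ∑ i ∈ I, V i / (1 + √(V i) / √(C i) * S / δ)
          ≤ ∑ i ∈ I, √(V i * C i) * (δ / S) := by
          refine sum_le_sum fun i hi => ?_
          have hVi := hV i hi; have hCi := hC i hi; have hSi := hS_pos i hi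
          calc V i / (1 + √(V i) / √(C i) * S / δ) ≤ V i / (√(V i) / √(C i) * S / δ) := by
                gcongr; linarith
            _ = _ := by
              rw [Real.sqrt_mul hVi.le]
              field_simp
              rw [Real.sq_sqrt hVi.le]
      _ ≤ δ := by
        rw [← sum_mul]
        rcases I.eq_empty_or_nonempty with rfl | ⟨i, hi⟩
        · simpa using hδ.le
        · rw [mul_div_cancel₀ _ (hS_pos i hi).ne']
  · calc ∑ i ∈ I, (1 + √(V i) / √(C i) * S / δ) * C i
          = ∑ i ∈ I, (C i + √(V i * C i) * (S / δ)) := sum_congr rfl fun i hi => by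
            have hCi := hC i hi
            rw [Real.sqrt_mul (hV i hi).le]
            field_simp
            linear_combination -(√(V i) * S) * Real.mul_self_sqrt hCi.le
      _ = _ := by rw [sum_add_distrib, ← sum_mul]; ring

theorem add_sq_div_le_mul_rpow_mul_abs_log {α β γ ε P S x a₁ a₂ B : ℝ} (hα : 0 < α)
    (hβ : β ≤ 2 * α) (hε : 0 < ε) (hεe : ε < Real.exp (-1)) (ha₁ : 0 ≤ a₁)
    (hx : 0 ≤ x) (hP : P ≤ a₁ * ε ^ (-(γ / α))) (hS₀ : 0 ≤ S)
    (hS : S ≤ a₂ * ε ^ (-((γ - β) / 2 / α))) (hxB : x ≤ B * |Real.log ε|) :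
    P + S ^ 2 / (ε ^ 2 / (2 * x)) ≤
      (a₁ + 2 * B * a₂ ^ 2) * ε ^ (-2 - (γ - β) / α) * |Real.log ε| := by
  have hlog := one_lt_abs_log hε hεe
  set E := ε ^ (-2 - (γ - β) / α)
  have hE : 0 < E := by positivity
  have hE₁ : ε ^ (-(γ / α)) ≤ E := by
    refine Real.rpow_le_rpow_of_exponent_ge hε (hεe.le.trans (by simp)) ?_
    have : β / α ≤ 2 := by rw [div_le_iff₀ hα]; linarith
    linarith [sub_div γ β α]
  have hE₂ : (ε ^ (-((γ - β) / 2 / α))) ^ 2 = ε ^ 2 * E := by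
    rw [← Real.rpow_mul_natCast hε.le, ← Real.rpow_natCast ε 2, ← Real.rpow_add hε]
    congr 1; push_cast; field_simp; ring
  calc P + S ^ 2 / (ε ^ 2 / (2 * x))
      ≤ a₁ * E + (a₂ * ε ^ (-((γ - β) / 2 / α))) ^ 2 / (ε ^ 2 / (2 * x)) := by
        gcongr
        exact hP.trans (by gcongr)
    _ = a₁ * E + 2 * x * a₂ ^ 2 * E := by
        rw [mul_pow, hE₂]; field_simp
    _ ≤ a₁ * E * |Real.log ε| + 2 * (B * |Real.log ε|) * a₂ ^ 2 * E :=
        add_le_add (le_mul_of_one_le_right (by positivity) hlog.le) (by gcongr)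
    _ = (a₁ + 2 * B * a₂ ^ 2) * E * |Real.log ε| := by ring

theorem mlmc_complexity_bound_general
    (s : ℝ) (hs : 2 ≤ s) (α β γ c v : ℝ)
    (hα : 0 < α) (hγ : 0 < γ) (hβγ : β < γ) (hαγ : γ / 2 ≤ α)
    (hc : 0 < c) (hv : 0 < v) :
    ∃ K : ℝ, 0 < K ∧
      ∀ ε : ℝ, 0 < ε → ε < Real.exp (-1) →
        ∀ L : ℕ, s ^ (-(α * ((L : ℝ) + 1))) ≤ ε → ε ≤ s ^ (-(α * (L : ℝ))) →
          ∀ C V : ℕ → ℝ,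
            (∀ ℓ, 0 < C ℓ) → (∀ ℓ ≤ L, C ℓ ≤ c * s ^ (γ * (ℓ : ℝ))) →
            (∀ ℓ, 0 < V ℓ) → (∀ ℓ ≤ L, V ℓ ≤ v * s ^ (-(β * (ℓ : ℝ)))) →
            ∃ N : ℕ → ℝ, (∀ ℓ ≤ L, 1 ≤ N ℓ) ∧
              ((L : ℝ) + 1) * ∑ ℓ ∈ range (L + 1), V ℓ / N ℓ ≤ ε ^ 2 / 2 ∧
              ∑ ℓ ∈ range (L + 1), N ℓ * C ℓ ≤
                K * ε ^ (-2 - (γ - β) / α) * |Real.log ε| := by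
  have ht : 0 < (γ - β) / 2 := by linarith
  have hA : 0 < (2 : ℝ) ^ γ / ((2 : ℝ) ^ γ - 1) :=
    div_pos (by positivity) (by linarith [Real.one_lt_rpow one_lt_two hγ])
  refine ⟨c * ((2 : ℝ) ^ γ / ((2 : ℝ) ^ γ - 1)) + 2 * (1 / (α * Real.log 2) + 1) *
    (√(v * c) * ((2 : ℝ) ^ ((γ - β) / 2) / ((2 : ℝ) ^ ((γ - β) / 2) - 1))) ^ 2,
    by positivity, ?_⟩
  intro ε hε hεe L _ hL C V hC hCle hV hVle
  obtain ⟨N, hN, hvar, hcost⟩ := exists_sampleSizes_sum_div_le_and_sum_mul_eq (range (L + 1))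
    (fun ℓ _ => hV ℓ) (fun ℓ _ => hC ℓ) (δ := ε ^ 2 / (2 * (L + 1))) (by positivity)
  refine ⟨N, fun ℓ hℓ => hN ℓ (mem_range_succ_iff.mpr hℓ), ?_, ?_⟩
  · calc ((L : ℝ) + 1) * ∑ ℓ ∈ range (L + 1), V ℓ / N ℓ
        ≤ ((L : ℝ) + 1) * (ε ^ 2 / (2 * (L + 1))) := by gcongr
      _ = ε ^ 2 / 2 := by field_simp
  rw [hcost]
  refine add_sq_div_le_mul_rpow_mul_abs_log hα (by linarith) hε hεe (by positivity)
    (by positivity) (sum_range_le_of_le_rpow_mul one_lt_two hs hγ hc.le hα hε hL hCle)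
    (sum_nonneg fun ℓ _ => Real.sqrt_nonneg _) ?_ (add_one_le_mul_abs_log hs hα hε hεe hL)
  exact sum_range_le_of_le_rpow_mul one_lt_two hs ht (Real.sqrt_nonneg _) hα hε hL
    fun ℓ hℓ => sqrt_mul_le_of_le_rpow (by linarith) hv.le hc.le (hV ℓ).le (hC ℓ).le
      (hVle ℓ hℓ) (hCle ℓ hℓ)

/-- Abstract multilevel MCMC complexity bound (case `β < γ`): with a geometric level
hierarchy of ratio `s ≥ 2`, per-level costs `Cℓ ≤ c s^{γℓ}`, variances `Vℓ ≤ v s^{-βℓ}`,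
`α ≥ γ/2`, and the finest level `L` chosen so that `s^{-αL} ≈ ε`, the sample numbers `Nℓ`
can be chosen so that `(L+1) ∑ℓ Vℓ/Nℓ ≤ ε²/2` while the total cost `∑ℓ Nℓ Cℓ` is bounded
by `K ε^{-2-(γ-β)/α} |log ε|`. -/
theorem mlmc_complexity_bound
    (s : ℝ) (hs : 2 ≤ s) (α β γ c v : ℝ)
    (hα : 0 < α) (hβ : 0 < β) (hγ : 0 < γ) (hβγ : β < γ) (hαγ : γ / 2 ≤ α)
    (hc : 0 < c) (hv : 0 < v) :
    ∃ K : ℝ, 0 < K ∧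
      ∀ ε : ℝ, 0 < ε → ε < Real.exp (-1) →
        ∀ L : ℕ, s ^ (-(α * ((L : ℝ) + 1))) ≤ ε → ε ≤ s ^ (-(α * (L : ℝ))) →
          ∀ C V : ℕ → ℝ,
            (∀ ℓ, 0 < C ℓ) → (∀ ℓ ≤ L, C ℓ ≤ c * s ^ (γ * (ℓ : ℝ))) →
            (∀ ℓ, 0 < V ℓ) → (∀ ℓ ≤ L, V ℓ ≤ v * s ^ (-(β * (ℓ : ℝ)))) →
            ∃ N : ℕ → ℝ, (∀ ℓ ≤ L, 1 ≤ N ℓ) ∧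
              ((L : ℝ) + 1) * ∑ ℓ ∈ range (L + 1), V ℓ / N ℓ ≤ ε ^ 2 / 2 ∧
              ∑ ℓ ∈ range (L + 1), N ℓ * C ℓ ≤
                K * ε ^ (-2 - (γ - β) / α) * |Real.log ε| :=
  mlmc_complexity_bound_general s hs α β γ c v hα hγ hβγ hαγ hc hv
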